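/- For z ≠ w in S_r, with N(z,w) the largest level n such that z and w lie in the support of a common Haar basis function, the matrix element satisfies ⟨δ_z, N δ_w⟩ = −2^{N(z,w)−r} + 2^{−r}. -/
import Mathlib


noncomputable section

/-- The sphere S_r of the binary tree, identified with {0,1}^r. -/
abbrev Sph (r : ℕ) := {l : List Bool // l.length = r}

/-- Index set for the Haar basis of ℓ²(S_r): `none` is the constant function
(level 0); `some p`, with p a binary word of length n−1 (1 ≤ n ≤ r), indexes
the level-n Haar function supported on the dyadic block of the 2^{r−n+1}
vertices having suffix p. -/
abbrev HaarIdx (r : ℕ) := Option {p : List Bool // p.length < r}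

/-- The level n(α) of a Haar basis function. -/
def haarLevel {r : ℕ} : HaarIdx r → ℕ
  | none => 0
  | some p => p.1.length + 1

/-- The Haar basis function ρ_α of ℓ²(S_r): the constant 2^{−r/2} at level 0,
and at level n the function supported on a dyadic block of size 2^{r−n+1}
taking the values ±2^{−(r−n+1)/2} on its two halves. -/
def haarFn {r : ℕ} (α : HaarIdx r) (v : Sph r) : ℂ :=
  match α with
  | none => ((Real.sqrt (2 ^ r))⁻¹ : ℝ)
  | some p =>
      if p.1 <:+ v.1 then
        (if v.1.getD (r - p.1.length - 1) true then 1 else -1)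
          * ((Real.sqrt (2 ^ (r - p.1.length)))⁻¹ : ℝ)
      else 0

/-- The Haar-level operator N = Σ_α n(α) ⟨ρ_α, ·⟩ ρ_α on ℓ²(S_r). -/
def NOp {r : ℕ} (φ : Sph r → ℂ) : Sph r → ℂ :=
  fun z => ∑' α : HaarIdx r,
    (haarLevel α : ℂ) * haarFn α z * ∑' w : Sph r, (starRingEnd ℂ) (haarFn α w) * φ w

/-- The standard basis vector δ_w. -/
def delta {r : ℕ} (w : Sph r) : Sph r → ℂ := fun u => if u = w then 1 else 0

/-- The matrix element ⟨δ_z, N δ_w⟩. -/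
def Nent {r : ℕ} (z w : Sph r) : ℂ := NOp (delta w) z

section Aux

lemma sum_pow_aux (m : ℕ) : ∑ j ∈ Finset.range m, ((j:ℂ)+1) * 2^j = ((m:ℂ)-1)*2^m + 1 := by
  induction m with
  | zero => simp
  | succ k ih =>
    rw [Finset.sum_range_succ, ih]
    push_cast
    ring

lemma conj_haarFn {r : ℕ} (α : HaarIdx r) (v : Sph r) :
    (starRingEnd ℂ) (haarFn α v) = haarFn α v := by
  cases α with
  | none => simp [haarFn]
  | some p =>
    simp only [haarFn]
    split_ifs <;> simp

lemma suffix_eq_drop {r : ℕ} (v : Sph r) (p : List Bool) (hp : p <:+ v.1) :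
    p = v.1.drop (r - p.length) := by
  obtain ⟨t, ht⟩ := hp
  have hlen : t.length = r - p.length := by
    have hv := v.2
    rw [← ht] at hv
    simp at hv
    omega
  rw [← ht, ← hlen, List.drop_left]

lemma haarFn_some_ne_zero {r : ℕ} (p : {p : List Bool // p.length < r}) (v : Sph r)
    (hp : p.1 <:+ v.1) : haarFn (some p) v ≠ 0 := by
  simp only [haarFn, if_pos hp]
  apply mul_ne_zero
  · split_ifs <;> norm_num
  · simp only [ne_eq, Complex.ofReal_eq_zero, inv_eq_zero]
    have : (0:ℝ) < Real.sqrt (2 ^ (r - p.1.length)) := Real.sqrt_pos.mpr (by positivity)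
    exact ne_of_gt this

lemma haarFn_some_suffix {r : ℕ} (p : {p : List Bool // p.length < r}) (v : Sph r)
    (h : haarFn (some p) v ≠ 0) : p.1 <:+ v.1 := by
  by_contra hc
  exact h (by simp [haarFn, hc])

lemma getD_congr_of_drop_eq {l l' : List Bool} {m : ℕ} (h : l.drop m = l'.drop m) (d : Bool) :
    l.getD m d = l'.getD m d := by
  rw [List.getD_eq_getElem?_getD, List.getD_eq_getElem?_getD]
  have h0 : l[m]? = (l.drop m)[0]? := by rw [List.getElem?_drop]; norm_num
  have h0' : l'[m]? = (l'.drop m)[0]? := by rw [List.getElem?_drop]; norm_num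
  rw [h0, h0', h]

lemma sign_mul_sign (b b' : Bool) (c : ℂ) :
    ((if b then (1:ℂ) else -1) * c) * ((if b' then (1:ℂ) else -1) * c) =
    (if b = b' then (1:ℂ) else -1) * (c * c) := by
  cases b <;> cases b' <;> simp <;> ring

end Aux

/-- for z ≠ w in S_r, if n = N(z,w) is the largest level such
that z and w both lie in the support of a common Haar basis function, then
⟨δ_z, N δ_w⟩ = −2^{N(z,w)−r} + 2^{−r}. -/

theorem N_offdiagonal_entry (r : ℕ) (z w : Sph r) (hzw : z ≠ w) (n : ℕ)
    (hmem : ∃ α : HaarIdx r, haarLevel α = n ∧ haarFn α z ≠ 0 ∧ haarFn α w ≠ 0)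
    (hmax : ∀ m : ℕ,
      (∃ α : HaarIdx r, haarLevel α = m ∧ haarFn α z ≠ 0 ∧ haarFn α w ≠ 0) →
      m ≤ n) :
    Nent z w = ((-(2 : ℝ) ^ ((n : ℤ) - (r : ℤ)) + (2 : ℝ) ^ (-(r : ℤ)) : ℝ) : ℂ) := by
  classical
  have hr : 0 < r := by
    rcases Nat.eq_zero_or_pos r with h | h
    · exfalso
      apply hzw
      apply Subtype.ext
      have hz := z.2; have hw := w.2
      subst h
      rw [List.length_eq_zero_iff] at hz hw
      rw [hz, hw]
    · exact h
  -- n ≥ 1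
  have hn1 : 1 ≤ n := by
    apply hmax 1
    refine ⟨some ⟨[], hr⟩, rfl, ?_, ?_⟩
    · exact haarFn_some_ne_zero _ _ List.nil_suffix
    · exact haarFn_some_ne_zero _ _ List.nil_suffix
  obtain ⟨L, rfl⟩ : ∃ L, n = L + 1 := ⟨n - 1, by omega⟩
  -- extract the maximal common suffix
  obtain ⟨α₀, hα₀lvl, hα₀z, hα₀w⟩ := hmem
  obtain ⟨q, rfl⟩ : ∃ q, α₀ = some q := by
    cases α₀ with
    | none => exact absurd hα₀lvl (by simp [haarLevel])
    | some q => exact ⟨q, rfl⟩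
  have hqlen : q.1.length = L := by
    have := hα₀lvl
    simp [haarLevel] at this
    omega
  have hLr : L < r := hqlen ▸ q.2
  have hqz : q.1 <:+ z.1 := haarFn_some_suffix _ _ hα₀z
  have hqw : q.1 <:+ w.1 := haarFn_some_suffix _ _ hα₀w
  have hq_z : q.1 = z.1.drop (r - L) := by
    have := suffix_eq_drop z q.1 hqz; rwa [hqlen] at this
  have hq_w : q.1 = w.1.drop (r - L) := by
    have := suffix_eq_drop w q.1 hqw; rwa [hqlen] at this
  -- common suffixes up to length L
  have hcs : ∀ j, j ≤ L → z.1.drop (r - j) = w.1.drop (r - j) := by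
    intro j hj
    have h1 : z.1.drop (r - j) = (z.1.drop (r - L)).drop (L - j) := by
      rw [List.drop_drop]
      congr 1
      omega
    have h2 : w.1.drop (r - j) = (w.1.drop (r - L)).drop (L - j) := by
      rw [List.drop_drop]
      congr 1
      omega
    rw [h1, h2, ← hq_z, ← hq_w]
  -- no common suffix of length > L
  have hns : ∀ j, j < r → L + 1 ≤ j → ¬ (z.1.drop (r - j) <:+ w.1) := by
    intro j hjr hjL hsuf
    have hlen : (z.1.drop (r - j)).length = j := by
      rw [List.length_drop, z.2]; omega
    have := hmax (j + 1) ⟨some ⟨z.1.drop (r - j), by omega⟩, by simp [haarLevel, hlen],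
      haarFn_some_ne_zero _ _ (List.drop_suffix _ _),
      haarFn_some_ne_zero _ _ hsuf⟩
    omega
  -- bits agree below L
  have hbits : ∀ j, j < L → z.1.getD (r - j - 1) true = w.1.getD (r - j - 1) true := by
    intro j hj
    have hd : z.1.drop (r - j - 1) = w.1.drop (r - j - 1) := by
      have := hcs (j + 1) (by omega)
      have e : r - (j + 1) = r - j - 1 := by omega
      rwa [e] at this
    exact getD_congr_of_drop_eq hd true
  -- bits differ at L
  have hbitL : z.1.getD (r - L - 1) true ≠ w.1.getD (r - L - 1) true := by
    intro heq
    have hk : r - L - 1 < z.1.length := by rw [z.2]; omega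
    have hk' : r - L - 1 < w.1.length := by rw [w.2]; omega
    have hget : z.1[r - L - 1]'hk = w.1[r - L - 1]'hk' := by
      have := heq
      rw [List.getD_eq_getElem?_getD, List.getD_eq_getElem?_getD,
        List.getElem?_eq_getElem hk, List.getElem?_eq_getElem hk'] at this
      simpa using this
    have hdropeq : z.1.drop (r - L - 1) = w.1.drop (r - L - 1) := by
      rw [List.drop_eq_getElem_cons hk, List.drop_eq_getElem_cons hk', hget]
      congr 1
      have e : r - L - 1 + 1 = r - L := by omega
      rw [e]
      exact hcs L le_rfl
    rcases Nat.lt_or_ge (L + 1) r with hlt | hge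
    · exact hns (L + 1) hlt le_rfl (by
        have e : r - (L + 1) = r - L - 1 := by omega
        rw [e, hdropeq]
        exact List.drop_suffix _ _)
    · -- L + 1 = r, so the drop is the whole list
      have hLr' : L + 1 = r := by omega
      apply hzw
      apply Subtype.ext
      have e : r - L - 1 = 0 := by omega
      rw [e] at hdropeq
      simpa using hdropeq
  -- the finite support
  set g : ℕ → HaarIdx r := fun j =>
    if h : j < r then some ⟨z.1.drop (r - j), by rw [List.length_drop, z.2]; omega⟩ else none
    with hg
  set F : HaarIdx r → ℂ := fun α =>
    (haarLevel α : ℂ) * haarFn α z * (starRingEnd ℂ) (haarFn α w) with hF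
  -- Step A : Nent = tsum F
  have hA : Nent z w = ∑' α : HaarIdx r, F α := by
    unfold Nent NOp
    apply tsum_congr
    intro α
    congr 1
    rw [tsum_eq_single w]
    · simp [delta]
    · intro u hu
      simp [delta, hu]
  -- Step B : tsum F = finite sum
  have hnone : (none : HaarIdx r) ∉ (Finset.range r).image g := by
    simp only [Finset.mem_image, Finset.mem_range]
    rintro ⟨j, hj, hgj⟩
    rw [hg] at hgj
    simp only [dif_pos hj] at hgj
    exact Option.some_ne_none _ hgj
  have hB : ∑' α : HaarIdx r, F α = ∑ α ∈ insert none ((Finset.range r).image g), F α := by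
    apply tsum_eq_sum
    intro α hα
    cases α with
    | none => exact absurd (Finset.mem_insert_self _ _) hα
    | some p =>
      by_cases hpz : p.1 <:+ z.1
      · exfalso
        apply hα
        apply Finset.mem_insert_of_mem
        rw [Finset.mem_image]
        refine ⟨p.1.length, Finset.mem_range.mpr p.2, ?_⟩
        rw [hg]
        simp only [dif_pos p.2]
        congr 1
        exact Subtype.ext (suffix_eq_drop z p.1 hpz).symm
      · rw [hF]
        simp only
        rw [show haarFn (some p) z = 0 by simp [haarFn, hpz]]
        ring
  have hginj : ∀ a ∈ Finset.range r, ∀ b ∈ Finset.range r, g a = g b → a = b := by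
    intro a ha b hb hab
    rw [Finset.mem_range] at ha hb
    rw [hg] at hab
    simp only [dif_pos ha, dif_pos hb, Option.some.injEq, Subtype.mk.injEq] at hab
    have : (z.1.drop (r - a)).length = (z.1.drop (r - b)).length := by rw [hab]
    rw [List.length_drop, List.length_drop, z.2] at this
    omega
  have hC : ∑ α ∈ insert none ((Finset.range r).image g), F α
      = ∑ j ∈ Finset.range r, F (g j) := by
    rw [Finset.sum_insert hnone, Finset.sum_image hginj]
    have : F none = 0 := by rw [hF]; simp [haarLevel]
    rw [this, zero_add]
  -- value of F (g j) for j ≤ L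
  have hval : ∀ j, j ≤ L → F (g j) =
      ((j:ℂ)+1) * (if j = L then -1 else 1) * ((2:ℂ)^(r-j))⁻¹ := by
    intro j hj
    have hjr : j < r := by omega
    rw [hg, hF]
    simp only [dif_pos hjr]
    have hplen : (z.1.drop (r - j)).length = j := by rw [List.length_drop, z.2]; omega
    have hpz : z.1.drop (r - j) <:+ z.1 := List.drop_suffix _ _
    have hpw : z.1.drop (r - j) <:+ w.1 := by rw [hcs j hj]; exact List.drop_suffix _ _
    rw [conj_haarFn]
    simp only [haarFn, haarLevel, hplen, if_pos hpz, if_pos hpw]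
    have hcc : (Complex.ofReal ((Real.sqrt (2 ^ (r - j)))⁻¹)) *
        (Complex.ofReal ((Real.sqrt (2 ^ (r - j)))⁻¹)) = ((2:ℂ)^(r-j))⁻¹ := by
      rw [← Complex.ofReal_mul, ← mul_inv, Real.mul_self_sqrt (by positivity)]
      push_cast
      ring
    rw [mul_assoc, sign_mul_sign, hcc]
    rcases eq_or_lt_of_le hj with hjL | hjL
    · subst hjL
      rw [if_neg hbitL, if_pos rfl]
      push_cast
      ring
    · rw [if_pos (hbits j hjL), if_neg (by omega)]
      push_cast
      ring
  -- F (g j) = 0 for j > L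
  have hzero : ∀ j, j < r → L < j → F (g j) = 0 := by
    intro j hjr hjL
    rw [hg, hF]
    simp only [dif_pos hjr]
    have hnsuf : ¬ (z.1.drop (r - j) <:+ w.1) := hns j hjr (by omega)
    rw [show haarFn (some ⟨z.1.drop (r - j), _⟩) w = 0 by simp [haarFn, hnsuf]]
    simp
  -- assemble
  rw [hA, hB, hC]
  have hsub : ∑ j ∈ Finset.range r, F (g j) = ∑ j ∈ Finset.range (L + 1), F (g j) := by
    symm
    apply Finset.sum_subset
    · intro j hj
      rw [Finset.mem_range] at *
      omega
    · intro j hj hj'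
      rw [Finset.mem_range] at hj
      rw [Finset.mem_range, not_lt] at hj'
      exact hzero j hj (by omega)
  rw [hsub, Finset.sum_range_succ]
  have hL : F (g L) = -(((L:ℂ)+1) * ((2:ℂ)^(r-L))⁻¹) := by
    rw [hval L le_rfl, if_pos rfl]; ring
  have hrest : ∀ j ∈ Finset.range L, F (g j) = ((j:ℂ)+1) * 2^j * ((2:ℂ)^r)⁻¹ := by
    intro j hj
    rw [Finset.mem_range] at hj
    rw [hval j (by omega), if_neg (by omega)]
    have h2 : (2:ℂ)^(r-j) * 2^j = 2^r := by
      rw [← pow_add]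
      congr 1
      omega
    have h2r : ((2:ℂ)^(r-j))⁻¹ = 2^j * ((2:ℂ)^r)⁻¹ := by
      field_simp
      linear_combination -h2
    rw [h2r]
    ring
  rw [Finset.sum_congr rfl hrest, hL]
  have hLpow : ((2:ℂ)^(r-L))⁻¹ = 2^L * ((2:ℂ)^r)⁻¹ := by
    have h2 : (2:ℂ)^(r-L) * 2^L = 2^r := by
      rw [← pow_add]; congr 1; omega
    field_simp
    linear_combination -h2
  rw [← Finset.sum_mul, sum_pow_aux, hLpow]
  -- RHS simplification
  have hrhs : ((-(2 : ℝ) ^ (((L+1 : ℕ) : ℤ) - (r : ℤ)) + (2 : ℝ) ^ (-(r : ℤ)) : ℝ) : ℂ)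
      = -((2:ℂ)^(L+1) * ((2:ℂ)^r)⁻¹) + ((2:ℂ)^r)⁻¹ := by
    rw [Complex.ofReal_add, Complex.ofReal_neg, Complex.ofReal_zpow, Complex.ofReal_zpow,
      Complex.ofReal_ofNat, zpow_sub₀ (two_ne_zero), zpow_neg, zpow_natCast, zpow_natCast]
    push_cast
    ring
  rw [hrhs]
  have h2r0 : ((2:ℂ)^r) ≠ 0 := pow_ne_zero r two_ne_zero
  field_simp
  ring
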